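/- Let m ∈ {3, 4, 6} and n ≥ 2 be natural numbers. Then (m·n) / gcd(m·n, m−1) ∈ {2, 3, 4, 6} if and only if (m, n) ∈ {(3,2), (3,4), (4,3), (6,5)}. -/
import Mathlib


theorem order_classification (m n : ℕ) (hm : m ∈ ({3, 4, 6} : Finset ℕ))
    (hn : 2 ≤ n) :
    (m * n) / Nat.gcd (m * n) (m - 1) ∈ ({2, 3, 4, 6} : Finset ℕ) ↔
      (m, n) ∈ ({(3, 2), (3, 4), (4, 3), (6, 5)} : Finset (ℕ × ℕ)) := by
  constructor
  · intro h
    have hd : Nat.gcd (m * n) (m - 1) ∣ m * n := Nat.gcd_dvd_left _ _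
    have hg' : Nat.gcd (m * n) (m - 1) ≤ m - 1 := by
      apply Nat.le_of_dvd (by fin_cases hm <;> omega) (Nat.gcd_dvd_right _ _)
    have h6 : (m * n) / Nat.gcd (m * n) (m - 1) ≤ 6 := by
      simp only [Finset.mem_insert, Finset.mem_singleton] at h; omega
    have heq : (m * n) / Nat.gcd (m * n) (m - 1) * Nat.gcd (m * n) (m - 1) = m * n :=
      Nat.div_mul_cancel hd
    have hb : m * n ≤ 6 * (m - 1) := by
      calc m * n = (m * n) / Nat.gcd (m * n) (m - 1) * Nat.gcd (m * n) (m - 1) := heq.symm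
        _ ≤ 6 * (m - 1) := Nat.mul_le_mul h6 hg'
    fin_cases hm <;>
      · have hub : n ≤ 10 := by omega
        interval_cases n <;> revert h <;> decide
  · intro h
    fin_cases h <;> decide
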